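/- Let Δt > 0 and ξ, w, Γ⁰, A, B ∈ ℝ³ be given, and perform one step of the heavy-top midpoint integrator: set Γ̃ := cay(−Δtξ̂)Γ⁰ and Γ¹ := cay(−Δtξ̂)Γ̃, and suppose A, B satisfy d⁻(Δt,ξ,A) − w × Γ̃ = d⁺(Δt,ξ,B); set Π⁰ := d⁺(Δt,ξ,A) and Π¹ := d⁻(Δt,ξ,B). Then both Casimir functions of the heavy-top Lie–Poisson bracket are exactly conserved: ‖Γ¹‖ = ‖Γ⁰‖ and Π¹ · Γ¹ = Π⁰ · Γ⁰. -/

import Mathlib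

open Matrix

noncomputable section

/-- The Euclidean norm on `ℝ³ = Fin 3 → ℝ`. -/
def e3norm (v : Fin 3 → ℝ) : ℝ := Real.sqrt (v ⬝ᵥ v)

/-- The hat map: the 3×3 skew-symmetric matrix `ξ̂` with `ξ̂ v = ξ × v`. -/
def hat (ξ : Fin 3 → ℝ) : Matrix (Fin 3) (Fin 3) ℝ :=
  !![0, -ξ 2, ξ 1; ξ 2, 0, -ξ 0; -ξ 1, ξ 0, 0]

/-- The Cayley transform `cay(hξ̂) = (I − (h/2)ξ̂)⁻¹ (I + (h/2)ξ̂)`. -/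
def cay (h : ℝ) (ξ : Fin 3 → ℝ) : Matrix (Fin 3) (Fin 3) ℝ :=
  (1 - (h / 2) • hat ξ)⁻¹ * (1 + (h / 2) • hat ξ)

/-- `d⁺(h,ξ,Π) = Π + (h/2) ξ×Π − (h²/4)(ξ·Π)ξ`. -/
def dplus (h : ℝ) (ξ Pv : Fin 3 → ℝ) : Fin 3 → ℝ :=
  Pv + (h / 2) • (ξ ⨯₃ Pv) - (h ^ 2 / 4 * (ξ ⬝ᵥ Pv)) • ξ

/-- `d⁻(h,ξ,Π) = Π − (h/2) ξ×Π − (h²/4)(ξ·Π)ξ`. -/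
def dminus (h : ℝ) (ξ Pv : Fin 3 → ℝ) : Fin 3 → ℝ :=
  Pv - (h / 2) • (ξ ⨯₃ Pv) - (h ^ 2 / 4 * (ξ ⬝ᵥ Pv)) • ξ

/-! The Cayley transform of a skew-symmetric matrix is orthogonal, so both half-steps
`Γ⁰ ↦ Γ̃ ↦ Γ¹` preserve dot products, which gives `‖Γ¹‖ = ‖Γ⁰‖`. Moreover `cay(−hξ̂)` maps
`d⁺(h,ξ,Π)` to `d⁻(h,ξ,Π)`, so
`Π¹·Γ¹ = d⁺(B)·Γ̃ = (d⁻(A) − w×Γ̃)·Γ̃ = d⁻(A)·Γ̃ = d⁺(A)·Γ⁰ = Π⁰·Γ⁰`. -/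

namespace Matrix

variable {n R : Type*} [Fintype n] [DecidableEq n] [CommRing R]

theorem dotProduct_mulVec_mulVec_of_transpose_mul_self {Q : Matrix n n R} (hQ : Qᵀ * Q = 1)
    (u v : n → R) : Q *ᵥ u ⬝ᵥ Q *ᵥ v = u ⬝ᵥ v := by
  rw [dotProduct_mulVec, ← mulVec_transpose, mulVec_mulVec, hQ, one_mulVec]

theorem transpose_mul_self_cayley {S : Matrix n n R} (hS : Sᵀ = -S) (hdet : IsUnit (1 - S).det) :
    ((1 - S)⁻¹ * (1 + S))ᵀ * ((1 - S)⁻¹ * (1 + S)) = 1 := by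
  have hplus : (1 + S)ᵀ = 1 - S := by rw [transpose_add, transpose_one, hS, sub_eq_add_neg]
  have hminus : (1 - S)ᵀ = 1 + S := by rw [transpose_sub, transpose_one, hS, sub_neg_eq_add]
  have hdet' : IsUnit (1 + S).det := by rwa [← hminus, det_transpose]
  have hcomm : (1 + S)⁻¹ * (1 - S)⁻¹ = (1 - S)⁻¹ * (1 + S)⁻¹ := by
    rw [← mul_inv_rev, ← mul_inv_rev]
    congr 1
    noncomm_ring
  rw [transpose_mul, transpose_nonsing_inv, hplus, hminus]
  calc (1 - S) * (1 + S)⁻¹ * ((1 - S)⁻¹ * (1 + S))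
      = (1 - S) * ((1 + S)⁻¹ * (1 - S)⁻¹) * (1 + S) := by noncomm_ring
    _ = (1 - S) * (1 - S)⁻¹ * ((1 + S)⁻¹ * (1 + S)) := by rw [hcomm]; noncomm_ring
    _ = 1 := by rw [mul_nonsing_inv _ hdet, nonsing_inv_mul _ hdet', one_mul]

end Matrix

theorem hat_transpose (ξ : Fin 3 → ℝ) : (hat ξ)ᵀ = -hat ξ := by
  ext i j
  fin_cases i <;> fin_cases j <;> simp [hat]

theorem hat_mulVec (ξ v : Fin 3 → ℝ) : hat ξ *ᵥ v = ξ ⨯₃ v := by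
  ext i
  fin_cases i <;> simp [hat, cross_apply, mulVec, vecHead, vecTail] <;> ring

theorem det_one_add_smul_hat (c : ℝ) (ξ : Fin 3 → ℝ) :
    (1 + c • hat ξ).det = 1 + c ^ 2 * (ξ ⬝ᵥ ξ) := by
  rw [det_fin_three, vec3_dotProduct]
  simp [hat]
  ring

theorem isUnit_det_one_add_smul_hat (c : ℝ) (ξ : Fin 3 → ℝ) : IsUnit (1 + c • hat ξ).det := by
  rw [det_one_add_smul_hat, isUnit_iff_ne_zero]
  exact (add_pos_of_pos_of_nonneg one_pos
    (mul_nonneg (sq_nonneg c) (dotProduct_self_star_nonneg ξ))).ne'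

theorem cay_dotProduct_cay (h : ℝ) (ξ u v : Fin 3 → ℝ) :
    cay h ξ *ᵥ u ⬝ᵥ cay h ξ *ᵥ v = u ⬝ᵥ v := by
  refine dotProduct_mulVec_mulVec_of_transpose_mul_self
    (transpose_mul_self_cayley ?_ ?_) u v
  · rw [transpose_smul, hat_transpose, smul_neg]
  · simpa only [sub_eq_add_neg, ← neg_smul] using isUnit_det_one_add_smul_hat (-(h / 2)) ξ

/-- Both sides equal `(1 + (h/2)²‖ξ‖²) Π − 2 (h/2)² (ξ·Π) ξ`. -/
theorem one_sub_smul_hat_mulVec_dplus (h : ℝ) (ξ Pv : Fin 3 → ℝ) :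
    (1 - (h / 2) • hat ξ) *ᵥ dplus h ξ Pv = (1 + (h / 2) • hat ξ) *ᵥ dminus h ξ Pv := by
  simp only [dplus, dminus, sub_mulVec, add_mulVec, one_mulVec, smul_mulVec, hat_mulVec, map_add,
    map_sub, map_smul, cross_self, smul_zero, cross_cross_eq_smul_sub_smul']
  module

theorem cay_neg_mulVec_dplus (h : ℝ) (ξ Pv : Fin 3 → ℝ) :
    cay (-h) ξ *ᵥ dplus h ξ Pv = dminus h ξ Pv := by
  have hcay : cay (-h) ξ = (1 + (h / 2) • hat ξ)⁻¹ * (1 - (h / 2) • hat ξ) := by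
    rw [cay, neg_div, neg_smul, sub_neg_eq_add, ← sub_eq_add_neg]
  rw [hcay, ← mulVec_mulVec, one_sub_smul_hat_mulVec_dplus, mulVec_mulVec,
    nonsing_inv_mul _ (isUnit_det_one_add_smul_hat _ ξ), one_mulVec]

theorem heavy_top_step_conserves_casimirs_general
    (Δt : ℝ) (ξ w Γ₀ A B Γt Γ₁ Pv₀ Pv₁ : Fin 3 → ℝ)
    (hΓt : Γt = (cay (-Δt) ξ).mulVec Γ₀)
    (hΓ₁ : Γ₁ = (cay (-Δt) ξ).mulVec Γt)
    (hAB : dminus Δt ξ A - w ⨯₃ Γt = dplus Δt ξ B)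
    (hPv₀ : Pv₀ = dplus Δt ξ A)
    (hPv₁ : Pv₁ = dminus Δt ξ B) :
    e3norm Γ₁ = e3norm Γ₀ ∧ Pv₁ ⬝ᵥ Γ₁ = Pv₀ ⬝ᵥ Γ₀ := by
  subst hΓ₁ hPv₀ hPv₁
  constructor
  · rw [e3norm, e3norm, cay_dotProduct_cay, hΓt, cay_dotProduct_cay]
  · calc dminus Δt ξ B ⬝ᵥ cay (-Δt) ξ *ᵥ Γt
        = dplus Δt ξ B ⬝ᵥ Γt := by rw [← cay_neg_mulVec_dplus, cay_dotProduct_cay]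
      _ = dminus Δt ξ A ⬝ᵥ Γt := by
        rw [← hAB, sub_dotProduct, dotProduct_comm (w ⨯₃ Γt), dot_cross_self, sub_zero]
      _ = dplus Δt ξ A ⬝ᵥ Γ₀ := by rw [hΓt, ← cay_neg_mulVec_dplus, cay_dotProduct_cay]

/-- One step of the heavy-top midpoint integrator exactly conserves both Casimir functions
of the heavy-top Lie–Poisson bracket on `se(3)* ≅ ℝ³ × ℝ³`: `‖Γ¹‖ = ‖Γ⁰‖` and
`Π¹ · Γ¹ = Π⁰ · Γ⁰`. -/
theorem heavy_top_step_conserves_casimirs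
    (Δt : ℝ) (hΔt : 0 < Δt) (ξ w Γ₀ A B Γt Γ₁ Pv₀ Pv₁ : Fin 3 → ℝ)
    (hΓt : Γt = (cay (-Δt) ξ).mulVec Γ₀)
    (hΓ₁ : Γ₁ = (cay (-Δt) ξ).mulVec Γt)
    (hAB : dminus Δt ξ A - w ⨯₃ Γt = dplus Δt ξ B)
    (hPv₀ : Pv₀ = dplus Δt ξ A)
    (hPv₁ : Pv₁ = dminus Δt ξ B) :
    e3norm Γ₁ = e3norm Γ₀ ∧ Pv₁ ⬝ᵥ Γ₁ = Pv₀ ⬝ᵥ Γ₀ :=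
  heavy_top_step_conserves_casimirs_general Δt ξ w Γ₀ A B Γt Γ₁ Pv₀ Pv₁ hΓt hΓ₁ hAB hPv₀ hPv₁
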